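/- (Interrupt-disablement-protection FSM satisfies LTL(8).) Consider the three-state Mealy machine of Figure 7 with states {ON, OFF, RESET}, inputs in(t) = (gie(t), PC(t)), transition function δ(ON, in) = ON if gie; OFF if ¬gie ∧ PC ∈ TCB; RESET otherwise; δ(OFF, in) = OFF if ¬gie; ON if gie ∧ PC ∈ TCB; RESET otherwise; δ(RESET, in) = OFF if PC = 0 and RESET otherwise; state trace q(t+1) = δ(q(t), in(t)); and output reset(t) := (δ(q(t), in(t)) = RESET). Suppose that whenever PC(t) = 0 the signal gie(t) is false (per H5: interrupts are disabled by default after a reset). Then for every initial state q(0) and every input trace, the output satisfies LTL(8): for every time t, if ¬reset(t) ∧ gie(t) ∧ ¬gie(t+1), then PC(t+1) ∈ TCB ∨ reset(t+1). -/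
import Mathlib


/-- States of the three-state interrupt-disablement-protection Mealy machine of Figure 7. -/
inductive GieState
  | ON
  | OFF
  | RESET
deriving DecidableEq

open Classical in
/-- Transition function of the Mealy machine of Figure 7, parameterized by the
current inputs: `gie`, `PC ∈ TCB`, and `PC = 0`. -/
noncomputable def gieDelta (gie inTCB pcZero : Prop) : GieState → GieState
  | .ON => if gie then .ON else if inTCB then .OFF else .RESET
  | .OFF => if ¬ gie then .OFF else if inTCB then .ON else .RESET
  | .RESET => if pcZero then .OFF else .RESET

/-- (Interrupt-disablement-protection FSM satisfies LTL(8).) -/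
theorem gie_fsm_satisfies_LTL8
    (TCB : Set ℕ)
    (PC : ℕ → ℕ)
    (gie : ℕ → Prop)
    (q : ℕ → GieState)
    -- state trace: q(t+1) = δ(q(t), in(t))
    (hstep : ∀ t, q (t + 1) = gieDelta (gie t) (PC t ∈ TCB) (PC t = 0) (q t))
    -- per H5: interrupts are disabled by default after a reset
    (hzero : ∀ t, PC t = 0 → ¬ gie t) :
    -- output reset(t) := (δ(q(t), in(t)) = RESET) satisfies LTL(8)
    ∀ t, ¬ (gieDelta (gie t) (PC t ∈ TCB) (PC t = 0) (q t) = GieState.RESET) ∧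
         gie t ∧ ¬ gie (t + 1) →
      PC (t + 1) ∈ TCB ∨
      gieDelta (gie (t + 1)) (PC (t + 1) ∈ TCB) (PC (t + 1) = 0) (q (t + 1))
        = GieState.RESET := by
  intro t ⟨hnr, hg, hng⟩
  have hq1 : q (t + 1) = GieState.ON := by
    rw [hstep t]
    cases hqt : q t with
    | ON => simp [gieDelta, hg]
    | OFF => simp only [gieDelta, hg, not_true_eq_false, if_false]
             by_cases h : PC t ∈ TCB
             · simp [h]
             · exfalso; apply hnr; simp [gieDelta, hqt, hg, h]
    | RESET => exfalso; apply hnr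
               by_cases h : PC t = 0
               · exact absurd hg (hzero t h)
               · simp [gieDelta, hqt, h]
  rw [hq1]
  by_cases h : PC (t + 1) ∈ TCB
  · exact Or.inl h
  · right; simp [gieDelta, hng, h]
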